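/- For every natural number i > 0, f(1 / (3^i - 1)) = 2^i / (3^i + 2^(i-1)). -/

import Mathlib

/-!
Put `a = 1 / (3^(k+1) - 1)`, so that `(1 + a) / 3^(k+1) = a`. The second equation followed by `k`
applications of the first carries `1 - a` to `a`; the second followed by `k` applications of the
third (`y ↦ (2 + y) / 3` contracts towards `1`) carries `a` to `1 - a`. This gives two linear
equations for `f a` and `f (1 - a)`, whose solution is `f a = 2^(k+1) / (3^(k+1) + 2^k)`.
-/

open Set

lemma div_three_pow_mem_Icc {x : ℝ} (hx : x ∈ Icc (0 : ℝ) 1) (k : ℕ) :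
    x / 3 ^ k ∈ Icc (0 : ℝ) 1 :=
  ⟨div_nonneg hx.1 (by positivity),
    div_le_one_of_le₀ (hx.2.trans (one_le_pow₀ (by norm_num))) (by positivity)⟩

lemma one_sub_div_three_pow_mem_Icc {x : ℝ} (hx : x ∈ Icc (0 : ℝ) 1) (k : ℕ) :
    1 - (1 - x) / 3 ^ k ∈ Icc (0 : ℝ) 1 :=
  Icc.one_sub_mem (div_three_pow_mem_Icc (Icc.one_sub_mem hx) k)

lemma two_sub_div_three_mem_Icc {x : ℝ} (hx : x ∈ Icc (0 : ℝ) 1) :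
    (2 - x) / 3 ∈ Icc (0 : ℝ) 1 :=
  ⟨by linarith [hx.2], by linarith [hx.1]⟩

lemma one_add_one_div_sub_one_div {N : ℝ} (hN : 1 < N) :
    (1 + 1 / (N - 1)) / N = 1 / (N - 1) := by
  have : N - 1 ≠ 0 := by linarith
  field_simp
  ring

section FunctionalEquations

variable {f : ℝ → ℝ}

lemma apply_div_three_pow (hw1 : ∀ x ∈ Icc (0 : ℝ) 1, f (x / 3) = (2/3) * f x)
    (k : ℕ) {x : ℝ} (hx : x ∈ Icc (0 : ℝ) 1) :
    f (x / 3 ^ k) = (2/3) ^ k * f x := by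
  induction k with
  | zero => simp
  | succ k ih =>
    rw [pow_succ, ← div_div, hw1 _ (div_three_pow_mem_Icc hx k), ih]
    ring

lemma apply_one_sub_div_three_pow
    (hw3 : ∀ x ∈ Icc (0 : ℝ) 1, f ((2 + x) / 3) = 1/3 + (2/3) * f x)
    (k : ℕ) {x : ℝ} (hx : x ∈ Icc (0 : ℝ) 1) :
    f (1 - (1 - x) / 3 ^ k) = 1 - (2/3) ^ k * (1 - f x) := by
  induction k with
  | zero => simp
  | succ k ih =>
    have hstep : 1 - (1 - x) / 3 ^ (k + 1) = (2 + (1 - (1 - x) / 3 ^ k)) / 3 := by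
      field_simp
      ring
    rw [hstep, hw3 _ (one_sub_div_three_pow_mem_Icc hx k), ih]
    ring

end FunctionalEquations

lemma eq_two_mul_div_three_add {r u v : ℝ} (hr₀ : 0 ≤ r) (hr₁ : r < 3)
    (hu : u = r * (1/3 * (1 + v))) (hv : v = 1 - r * (1 - 1/3 * (1 + u))) :
    u = 2 * r / (3 + r) := by
  have h3r : (3 - r) * (u * (3 + r) - 2 * r) = 0 := by
    subst hv
    linear_combination 9 * hu
  rw [eq_div_iff (by linarith)]
  linarith [(mul_eq_zero.1 h3r).resolve_left (by linarith)]

theorem bourbaki_stmt_general (f : ℝ → ℝ)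
    (hw1 : ∀ x ∈ Set.Icc (0:ℝ) 1, f (x / 3) = (2/3) * f x)
    (hw2 : ∀ x ∈ Set.Icc (0:ℝ) 1, f ((2 - x) / 3) = (1/3) * (1 + f x))
    (hw3 : ∀ x ∈ Set.Icc (0:ℝ) 1, f ((2 + x) / 3) = 1/3 + (2/3) * f x) :
    ∀ i : ℕ, 0 < i → f (1 / (3 ^ i - 1)) = 2 ^ i / (3 ^ i + 2 ^ (i - 1)) := by
  intro i hi
  obtain ⟨k, rfl⟩ := Nat.exists_eq_add_one_of_ne_zero hi.ne'
  have h3 : (3 : ℝ) ≤ 3 ^ (k + 1) := le_self_pow₀ (by norm_num) (by omega)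
  set a : ℝ := 1 / (3 ^ (k + 1) - 1)
  have ha : a ∈ Icc (0 : ℝ) 1 :=
    ⟨div_nonneg zero_le_one (by linarith), div_le_one_of_le₀ (by linarith) (by linarith)⟩
  have hfix : (1 + a) / 3 / 3 ^ k = a := by
    rw [div_div, ← pow_succ']
    exact one_add_one_div_sub_one_div (by linarith)
  have hfa : f a = (2/3) ^ k * (1/3 * (1 + f (1 - a))) := by
    calc f a = f ((2 - (1 - a)) / 3 / 3 ^ k) := by
          rw [show 2 - (1 - a) = 1 + a by ring, hfix]
      _ = _ := by
        rw [apply_div_three_pow hw1 k (two_sub_div_three_mem_Icc (Icc.one_sub_mem ha)),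
          hw2 _ (Icc.one_sub_mem ha)]
  have hfb : f (1 - a) = 1 - (2/3) ^ k * (1 - 1/3 * (1 + f a)) := by
    calc f (1 - a) = f (1 - (1 - (2 - a) / 3) / 3 ^ k) := by
          rw [show 1 - (2 - a) / 3 = (1 + a) / 3 by ring, hfix]
      _ = _ := by
        rw [apply_one_sub_div_three_pow hw3 k (two_sub_div_three_mem_Icc ha), hw2 _ ha]
  have hr : (2/3 : ℝ) ^ k < 3 :=
    (pow_le_one₀ (by norm_num) (by norm_num)).trans_lt (by norm_num)
  rw [eq_two_mul_div_three_add (by positivity) hr hfa hfb, Nat.add_sub_cancel, div_pow]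
  field_simp
  ring

theorem bourbaki_stmt (f : ℝ → ℝ)
    (hcont : ContinuousOn f (Set.Icc 0 1))
    (h0 : f 0 = 0) (h1 : f 1 = 1)
    (hw1 : ∀ x ∈ Set.Icc (0:ℝ) 1, f (x / 3) = (2/3) * f x)
    (hw2 : ∀ x ∈ Set.Icc (0:ℝ) 1, f ((2 - x) / 3) = (1/3) * (1 + f x))
    (hw3 : ∀ x ∈ Set.Icc (0:ℝ) 1, f ((2 + x) / 3) = 1/3 + (2/3) * f x) :
    ∀ i : ℕ, 0 < i → f (1 / (3 ^ i - 1)) = 2 ^ i / (3 ^ i + 2 ^ (i - 1)) :=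
  bourbaki_stmt_general f hw1 hw2 hw3
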